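/- Let Γ ∈ G_{n,3} be an admissible graph with three boundary vertices, with unique left factorization (Γ/α_L(Γ), α_L(Γ)) and right factorization (Γ/α_R(Γ), α_R(Γ)). Then the normalized left coefficient equals the normalized right coefficient: L_Γ / (|Aut(Γ/α_L(Γ))|·|Aut(α_L(Γ))|) = R_Γ / (|Aut(Γ/α_R(Γ))|·|Aut(α_R(Γ))|), where L_Γ (resp. R_Γ) is the number of left (resp. right) insertion data producing a graph isomorphic to Γ; indeed both sides equal 1/|Aut(Γ)|. -/

import Mathlib

/-- An admissible graph: finite directed acyclic graph, boundary vertices are sinks,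
internal vertices have exactly two outgoing edges. -/
def IsAdm {V : Type} [Fintype V] [DecidableEq V]
    (edge : V → V → Bool) (bd : Finset V) : Prop :=
  (∀ v : V, ¬ Relation.TransGen (fun a b => edge a b = true) v v) ∧
  (∀ v ∈ bd, ∀ w, edge v w = false) ∧
  (∀ v ∉ bd, (Finset.univ.filter (fun w => edge v w = true)).card = 2)

/-- The edge relation of the quotient graph `Γ/Θ`, obtained by collapsing the
vertex set `T` of the subgraph `Θ` to a single new boundary vertex `none`. -/
def qedge {V : Type} [Fintype V] [DecidableEq V] (edge : V → V → Bool) (T : Finset V) :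
    Option {v : V // v ∉ T} → Option {v : V // v ∉ T} → Bool
  | some a, some b => edge a.1 b.1
  | some a, none => decide (∃ t ∈ T, edge a.1 t = true)
  | none, _ => false

/-- The boundary of the quotient graph `Γ/Θ`: the surviving boundary vertices of `Γ`
together with the new boundary vertex `none`. -/
def qbd {V : Type} [Fintype V] [DecidableEq V] (bd T : Finset V) :
    Finset (Option {v : V // v ∉ T}) :=
  Finset.univ.filter (fun x => x = none ∨ ∃ a : {v : V // v ∉ T}, x = some a ∧ a.1 ∈ bd)

/-- `T` is (the vertex set of) a normal subgraph of `Γ` sitting on the boundary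
vertices `B`. -/
def NormalOn {V : Type} [Fintype V] [DecidableEq V]
    (edge : V → V → Bool) (bd : Finset V) (T B : Finset V) : Prop :=
  T ∩ bd = B ∧
  IsAdm (fun a b : {v : V // v ∈ T} => edge a.1 b.1)
    (Finset.univ.filter (fun a : {v : V // v ∈ T} => a.1 ∈ bd)) ∧
  IsAdm (qedge edge T) (qbd bd T)

/-- Edge relation of the insertion of `Γ₂` (edges `e₂`) at the boundary vertex `c1`
of `Γ₁` (edges `e₁`) along the insertion datum `π`. -/
def edgeIns {V₁ V₂ : Type} [DecidableEq V₂]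
    (e₁ : V₁ → V₁ → Bool) (e₂ : V₂ → V₂ → Bool) (c1 : V₁)
    (π : {a : V₁ // e₁ a c1 = true} → V₂) :
    ({v : V₁ // v ≠ c1} ⊕ V₂) → ({v : V₁ // v ≠ c1} ⊕ V₂) → Bool
  | .inl a, .inl b => e₁ a.1 b.1
  | .inl a, .inr w => if h : e₁ a.1 c1 = true then decide (π ⟨a.1, h⟩ = w) else false
  | .inr w, .inr v => e₂ w v
  | .inr _, .inl _ => false

/-- Automorphisms of a graph with two ordered boundary vertices. -/
def AutG {V : Type} (edge : V → V → Bool) (x y : V) : Type :=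
  {φ : V ≃ V // (∀ a b, edge (φ a) (φ b) = edge a b) ∧ φ x = x ∧ φ y = y}

/-- Automorphisms of a graph with three ordered boundary vertices. -/
def Aut3 {V : Type} (edge : V → V → Bool) (x y z : V) : Type :=
  {φ : V ≃ V // (∀ a b, edge (φ a) (φ b) = edge a b) ∧ φ x = x ∧ φ y = y ∧ φ z = z}

/-!
Count the pairs `(π, φ)` of an insertion datum `π` and an isomorphism `φ` from the inserted
graph onto `Γ` fixing the boundary. Fibred over `π`, every nonempty fibre is a torsor under
`Aut(Γ)`, so there are `L_Γ · |Aut(Γ)|` pairs. On the other hand, the normal subgraph `T` is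
exactly the set of vertices from which the boundary vertex outside `T` cannot be reached, so `φ`
maps the inserted copy of `T` onto `T` and the rest onto the complement. Restricting `φ` to the
two parts gives automorphisms of the subgraph and of the quotient, and conversely every such pair
glues, through the datum sending each edge into the collapsed vertex to its actual target, to a
unique pair `(π, φ)`. Hence `L_Γ · |Aut(Γ)| = |Aut(Γ/α_L)| · |Aut(α_L)|`, and likewise on the
right.
-/

open Finset Relation

section MarkedIso

variable {W U : Type}

def IsIso3 (e₁ : W → W → Bool) (e : U → U → Bool) (p q r : W) (x y z : U) (φ : W ≃ U) :
    Prop :=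
  (∀ u v, e (φ u) (φ v) = e₁ u v) ∧ φ p = x ∧ φ q = y ∧ φ r = z

variable {e₁ : W → W → Bool} {e : U → U → Bool} {p q r : W} {x y z : U}

theorem isIso3_rotate {φ : W ≃ U} :
    IsIso3 e₁ e p q r x y z φ ↔ IsIso3 e₁ e q r p y z x φ := by
  unfold IsIso3
  tauto

def IsIso3.equivAut3 {φ₀ : W ≃ U} (h₀ : IsIso3 e₁ e p q r x y z φ₀) :
    {φ // IsIso3 e₁ e p q r x y z φ} ≃ Aut3 e x y z where
  toFun φ := ⟨φ₀.symm.trans φ.1, by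
    obtain ⟨hφ, hp, hq, hr⟩ := φ.2
    refine ⟨fun a b => ?_, ?_, ?_, ?_⟩
    · simp [hφ, ← h₀.1 (φ₀.symm a) (φ₀.symm b)]
    · simp [φ₀.symm_apply_eq.2 h₀.2.1.symm, hp]
    · simp [φ₀.symm_apply_eq.2 h₀.2.2.1.symm, hq]
    · simp [φ₀.symm_apply_eq.2 h₀.2.2.2.symm, hr]⟩
  invFun α := ⟨φ₀.trans α.1, by
    obtain ⟨hα, hx, hy, hz⟩ := α.2
    exact ⟨fun a b => by simp [hα, h₀.1], by simp [h₀.2.1, hx], by simp [h₀.2.2.1, hy],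
      by simp [h₀.2.2.2, hz]⟩⟩
  left_inv φ := Subtype.ext (Equiv.ext fun _ => by simp)
  right_inv α := Subtype.ext (Equiv.ext fun _ => by simp)

theorem card_aut3_rotate (e : U → U → Bool) (x y z : U) :
    Nat.card (Aut3 e x y z) = Nat.card (Aut3 e y z x) :=
  Nat.card_congr (Equiv.subtypeEquivRight fun _ => isIso3_rotate (e₁ := e))

theorem card_autG_comm (e : U → U → Bool) (x y : U) :
    Nat.card (AutG e x y) = Nat.card (AutG e y x) :=
  Nat.card_congr (Equiv.subtypeEquivRight fun _ => and_congr_right' and_comm)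

theorem card_autG_pos [Finite U] (e : U → U → Bool) (x y : U) : 0 < Nat.card (AutG e x y) :=
  Nat.card_pos_iff.2 ⟨⟨⟨Equiv.refl U, fun _ _ => rfl, rfl, rfl⟩⟩, Subtype.finite⟩

theorem card_aut3_pos [Finite U] (e : U → U → Bool) (x y z : U) :
    0 < Nat.card (Aut3 e x y z) :=
  Nat.card_pos_iff.2 ⟨⟨⟨Equiv.refl U, fun _ _ => rfl, rfl, rfl, rfl⟩⟩, Subtype.finite⟩

end MarkedIso

section Admissible

variable {W : Type} [Fintype W] [DecidableEq W] {edge : W → W → Bool} {bd : Finset W}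

theorem IsAdm.wellFounded (hΓ : IsAdm edge bd) : WellFounded (fun a b => edge b a = true) := by
  let r : W → W → Prop := fun a b => edge b a = true
  have : Std.Irrefl (TransGen r) := ⟨fun a ha => hΓ.1 a (transGen_swap.1 ha)⟩
  exact Subrelation.wf (TransGen.single (r := r)) (Finite.wellFounded_of_trans_of_irrefl _)

theorem IsAdm.not_mem_of_edge (hΓ : IsAdm edge bd) {v w : W} (h : edge v w = true) : v ∉ bd :=
  fun hv => by simp [hΓ.2.1 v hv w] at h

theorem IsAdm.exists_pair (hΓ : IsAdm edge bd) {v : W} (hv : v ∉ bd) :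
    ∃ t₁ t₂, t₁ ≠ t₂ ∧ edge v t₁ = true ∧ edge v t₂ = true := by
  obtain ⟨t₁, t₂, hne, h⟩ := card_eq_two.1 (hΓ.2.2 v hv)
  have hmem : ∀ t ∈ ({t₁, t₂} : Finset W), edge v t = true := by
    intro t ht
    rw [← h] at ht
    exact (mem_filter.1 ht).2
  exact ⟨t₁, t₂, hne, hmem t₁ (by simp), hmem t₂ (by simp)⟩

theorem IsAdm.eq_or_eq_of_edge (hΓ : IsAdm edge bd) {v t₁ t₂ w : W} (hne : t₁ ≠ t₂)
    (h₁ : edge v t₁ = true) (h₂ : edge v t₂ = true) (hw : edge v w = true) :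
    w = t₁ ∨ w = t₂ := by
  have hsub : {t₁, t₂} ⊆ univ.filter (fun w => edge v w = true) := by
    simp [insert_subset_iff, h₁, h₂]
  have heq := eq_of_subset_of_card_le hsub
    (by rw [hΓ.2.2 v (hΓ.not_mem_of_edge h₁), card_pair hne])
  have : w ∈ ({t₁, t₂} : Finset W) := heq ▸ mem_filter.2 ⟨mem_univ w, hw⟩
  simpa using this

end Admissible

abbrev Reach {V : Type} (edge : V → V → Bool) : V → V → Prop :=
  ReflTransGen (fun a b => edge a b = true)

theorem mem_of_edge_of_mem {V : Type} {edge : V → V → Bool} {T : Finset V} {z : V}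
    (hT : ∀ v, v ∈ T ↔ ¬ Reach edge v z) {t w : V} (ht : t ∈ T) (he : edge t w = true) :
    w ∈ T := by
  rw [hT] at ht ⊢
  exact fun hw => ht (hw.head he)

section Normal

variable {V : Type} [Fintype V] [DecidableEq V] {edge : V → V → Bool} {bd T B : Finset V}

theorem NormalOn.mem_of_edge (hΓ : IsAdm edge bd) (hN : NormalOn edge bd T B) {t w : V}
    (ht : t ∈ T) (hw : edge t w = true) : w ∈ T := by
  obtain ⟨s₁, s₂, hne, h₁, h₂⟩ :=
    hN.2.1.exists_pair (v := ⟨t, ht⟩) (by simpa using hΓ.not_mem_of_edge hw)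
  rcases hΓ.eq_or_eq_of_edge (Subtype.coe_ne_coe.2 hne) h₁ h₂ hw with rfl | rfl
  exacts [s₁.2, s₂.2]

theorem NormalOn.exists_edge_not_mem (hN : NormalOn edge bd T B) {v : V} (hv : v ∉ T)
    (hvb : v ∉ bd) : ∃ w ∉ T, edge v w = true := by
  obtain ⟨o₁, o₂, hne, h₁, h₂⟩ :=
    hN.2.2.exists_pair (v := some ⟨v, hv⟩) (by simp [qbd, hvb])
  match o₁, o₂ with
  | some w, _ => exact ⟨w.1, w.2, h₁⟩
  | none, some w => exact ⟨w.1, w.2, h₂⟩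
  | none, none => exact absurd rfl hne

/-- Two edges from `v` into `T` would leave `v` a single edge, to the collapsed vertex, in the
quotient. -/
theorem NormalOn.eq_of_edge_of_edge (hΓ : IsAdm edge bd) (hN : NormalOn edge bd T B)
    {v t₁ t₂ : V} (hv : v ∉ T) (ht₁ : t₁ ∈ T) (ht₂ : t₂ ∈ T)
    (h₁ : edge v t₁ = true) (h₂ : edge v t₂ = true) : t₁ = t₂ := by
  by_contra hne
  obtain ⟨w, hw, hew⟩ := hN.exists_edge_not_mem hv (hΓ.not_mem_of_edge h₁)
  rcases hΓ.eq_or_eq_of_edge hne h₁ h₂ hew with rfl | rfl <;> contradiction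

theorem NormalOn.reach_of_not_mem (hΓ : IsAdm edge bd) (hN : NormalOn edge bd T B) {z : V}
    (hbd : ∀ b ∈ bd, b ∉ T → b = z) {v : V} (hv : v ∉ T) : Reach edge v z := by
  induction v using hΓ.wellFounded.induction with
  | _ v ih =>
    by_cases hvb : v ∈ bd
    · rw [hbd v hvb hv]
    · obtain ⟨w, hw, hew⟩ := hN.exists_edge_not_mem hv hvb
      exact ReflTransGen.head hew (ih w hew hw)

theorem NormalOn.mem_iff_not_reach (hΓ : IsAdm edge bd) (hN : NormalOn edge bd T B) {z : V}
    (hbd : ∀ b ∈ bd, b ∉ T → b = z) (hz : z ∉ T) (v : V) : v ∈ T ↔ ¬ Reach edge v z := by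
  refine ⟨fun hv hr => hz ?_, fun h => by_contra fun hv => h (hN.reach_of_not_mem hΓ hbd hv)⟩
  have closed : ∀ w, Reach edge v w → w ∈ T := fun w hr => by
    induction hr with
    | refl => exact hv
    | tail _ he ih => exact hN.mem_of_edge hΓ ih he
  exact closed z hr

end Normal

namespace Insertion

variable {V : Type} [DecidableEq V]

abbrev Vert (T : Finset V) : Type :=
  {a : Option {v : V // v ∉ T} // a ≠ none} ⊕ {v : V // v ∈ T}

section Collapse

variable {T : Finset V}

def collapse (T : Finset V) : Vert T ≃ V where
  toFun
    | .inl ⟨some a, _⟩ => a.1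
    | .inl ⟨none, h⟩ => absurd rfl h
    | .inr t => t.1
  invFun v := if h : v ∈ T then .inr ⟨v, h⟩ else .inl ⟨some ⟨v, h⟩, Option.some_ne_none _⟩
  left_inv := by
    rintro (⟨_ | a, h⟩ | t)
    · exact absurd rfl h
    · simp [a.2]
    · simp [t.2]
  right_inv v := by
    by_cases h : v ∈ T <;> simp [h]

theorem collapse_inl_not_mem (a : {a : Option {v : V // v ∉ T} // a ≠ none}) :
    collapse T (.inl a) ∉ T := by
  rcases a with ⟨_ | a, h⟩
  exacts [absurd rfl h, a.2]

theorem some_collapse_inl (a : {a : Option {v : V // v ∉ T} // a ≠ none}) :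
    some ⟨collapse T (.inl a), collapse_inl_not_mem a⟩ = a.1 := by
  rcases a with ⟨_ | a, h⟩
  exacts [absurd rfl h, rfl]

end Collapse

variable [Fintype V] {edge : V → V → Bool} {T : Finset V}

abbrev Datum (edge : V → V → Bool) (T : Finset V) : Type :=
  {a : Option {v : V // v ∉ T} // qedge edge T a none = true} → {v : V // v ∈ T}

abbrev subEdge (edge : V → V → Bool) (T : Finset V) (a b : {v : V // v ∈ T}) : Bool :=
  edge a.1 b.1

abbrev insEdge (edge : V → V → Bool) (T : Finset V) (π : Datum edge T) :
    Vert T → Vert T → Bool :=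
  edgeIns (qedge edge T) (subEdge edge T) none π

def SingleEntry (edge : V → V → Bool) (T : Finset V) : Prop :=
  ∀ v ∉ T, ∀ t₁ ∈ T, ∀ t₂ ∈ T, edge v t₁ = true → edge v t₂ = true → t₁ = t₂

theorem qedge_some_none {a : {v : V // v ∉ T}} :
    qedge edge T (some a) none = true ↔ ∃ t ∈ T, edge a.1 t = true := by
  simp [qedge]

noncomputable def canonicalDatum (edge : V → V → Bool) (T : Finset V) : Datum edge T
  | ⟨none, h⟩ => absurd h (by simp [qedge])
  | ⟨some _, h⟩ => ⟨_, (qedge_some_none.1 h).choose_spec.1⟩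

theorem canonicalDatum_eq_iff (hu : SingleEntry edge T)
    {a : {v : V // v ∉ T}} (h : qedge edge T (some a) none = true) (w : {v : V // v ∈ T}) :
    canonicalDatum edge T ⟨some a, h⟩ = w ↔ edge a.1 w.1 = true := by
  obtain ⟨ht, hat⟩ := (qedge_some_none.1 h).choose_spec
  refine ⟨fun hw => hw ▸ hat, fun hw => Subtype.ext (hu a.1 a.2 _ ht w.1 w.2 hat hw)⟩

theorem edge_collapse {z : V} (hT : ∀ v, v ∈ T ↔ ¬ Reach edge v z) (hu : SingleEntry edge T)
    (u v : Vert T) :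
    edge (collapse T u) (collapse T v) = insEdge edge T (canonicalDatum edge T) u v := by
  rcases u with ⟨_ | a, ha⟩ | s <;> rcases v with ⟨_ | b, hb⟩ | w
  all_goals first | exact absurd rfl ha | exact absurd rfl hb | rfl | skip
  · show edge a.1 w.1 = dite _ _ _
    split_ifs with h
    · exact Bool.eq_iff_iff.2 ((canonicalDatum_eq_iff hu h w).symm.trans decide_eq_true_iff.symm)
    · exact Bool.eq_false_iff.2 fun he => h (qedge_some_none.2 ⟨w.1, w.2, he⟩)
  · exact Bool.eq_false_iff.2 fun he => b.2 (mem_of_edge_of_mem hT s.2 he)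

section Transport

variable {z : V} {π : Datum edge T} {φ : Vert T ≃ V}

theorem isRight_of_reach_inr {s : {v : V // v ∈ T}} {u : Vert T}
    (h : ReflTransGen (fun a b => insEdge edge T π a b = true) (.inr s) u) : u.isRight := by
  induction h with
  | refl => rfl
  | @tail b c _ he ih =>
    rcases b with _ | b <;> rcases c with _ | c <;> simp_all [edgeIns]

variable (hT : ∀ v, v ∈ T ↔ ¬ Reach edge v z)
  (hφ : ∀ u v, edge (φ u) (φ v) = insEdge edge T π u v)
  {a₀ : {a : Option {v : V // v ∉ T} // a ≠ none}} (hzφ : φ (.inl a₀) = z)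

include hT hφ hzφ

/-- Nothing in the inserted copy of `T` reaches the outer vertex `φ⁻¹ z`. -/
theorem iso_inr_mem (t : {v : V // v ∈ T}) : φ (.inr t) ∈ T := by
  rw [hT]
  intro hr
  have hr' : ReflTransGen (fun a b => insEdge edge T π a b = true)
      (φ.symm (φ (.inr t))) (φ.symm z) :=
    hr.lift _ fun a b h => by
      show insEdge edge T π _ _ = true
      rwa [← hφ, Equiv.apply_symm_apply, Equiv.apply_symm_apply]
  rw [Equiv.symm_apply_apply, ← hzφ, Equiv.symm_apply_apply] at hr'
  simpa using isRight_of_reach_inr hr'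

noncomputable def isoSub : {v : V // v ∈ T} ≃ {v : V // v ∈ T} :=
  Equiv.ofBijective (fun t => ⟨φ (.inr t), iso_inr_mem hT hφ hzφ t⟩)
    (Finite.injective_iff_bijective.1 fun s t h => by simpa using congrArg Subtype.val h)

theorem iso_inl_not_mem (a : {a : Option {v : V // v ∉ T} // a ≠ none}) : φ (.inl a) ∉ T :=
  fun h => by
    obtain ⟨t, ht⟩ := (isoSub hT hφ hzφ).surjective ⟨_, h⟩
    exact Sum.inr_ne_inl (φ.injective (congrArg Subtype.val ht))

noncomputable def isoQuot : {v : V // v ∉ T} ≃ {v : V // v ∉ T} :=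
  Equiv.ofBijective (fun a => ⟨φ (.inl ⟨some a, Option.some_ne_none _⟩),
      iso_inl_not_mem hT hφ hzφ _⟩)
    (Finite.injective_iff_bijective.1 fun s t h => by simpa using congrArg Subtype.val h)

omit hT hzφ in
theorem edge_iso_inl_inr (a : {a : Option {v : V // v ∉ T} // a ≠ none})
    (s : {v : V // v ∈ T}) :
    edge (φ (.inl a)) (φ (.inr s)) = true ↔ ∃ h, π ⟨a.1, h⟩ = s := by
  rw [hφ]
  show dite _ _ _ = true ↔ _
  split_ifs with h <;> simp [h]

theorem qedge_iso_inl_none (a : {a : Option {v : V // v ∉ T} // a ≠ none}) :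
    qedge edge T (some ⟨φ (.inl a), iso_inl_not_mem hT hφ hzφ a⟩) none = qedge edge T a.1 none := by
  refine Bool.eq_iff_iff.2 (qedge_some_none.trans ⟨?_, fun h => ?_⟩)
  · rintro ⟨t, ht, he⟩
    obtain ⟨s, hs⟩ := (isoSub hT hφ hzφ).surjective ⟨t, ht⟩
    have hst : φ (.inr s) = t := congrArg Subtype.val hs
    exact ((edge_iso_inl_inr hφ a s).1 (hst ▸ he)).1
  · exact ⟨_, iso_inr_mem hT hφ hzφ _, (edge_iso_inl_inr hφ a _).2 ⟨h, rfl⟩⟩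

end Transport

section Factorization

variable {x y z : V} {hx : x ∈ T} {hy : y ∈ T} {hz : z ∉ T}

abbrev IsInsIso (edge : V → V → Bool) (hx : x ∈ T) (hy : y ∈ T) (hz : z ∉ T)
    (π : Datum edge T) (φ : Vert T ≃ V) : Prop :=
  IsIso3 (insEdge edge T π) edge (.inr ⟨x, hx⟩) (.inr ⟨y, hy⟩)
    (.inl ⟨some ⟨z, hz⟩, Option.some_ne_none _⟩) x y z φ

theorem AutG.qedge_apply_none {c : Option {v : V // v ∉ T}} (ψ : AutG (qedge edge T) none c)
    (a : Option {v : V // v ∉ T}) : qedge edge T (ψ.1 a) none = qedge edge T a none := by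
  simpa [ψ.2.2.1] using ψ.2.1 a none

def AutG.restrictNone {c : Option {v : V // v ∉ T}} (ψ : AutG (qedge edge T) none c) :
    {a : Option {v : V // v ∉ T} // a ≠ none} ≃ {a : Option {v : V // v ∉ T} // a ≠ none} :=
  ψ.1.subtypeEquiv fun _ => (ψ.1.injective.ne_iff' ψ.2.2.1).symm

variable (ψQ : AutG (qedge edge T) none (some ⟨z, hz⟩))
  (ψS : AutG (subEdge edge T) ⟨x, hx⟩ ⟨y, hy⟩)

noncomputable def glueDatum : Datum edge T := fun e =>
  ψS.1.symm (canonicalDatum edge T ⟨ψQ.1 e.1, (AutG.qedge_apply_none ψQ e.1).trans e.2⟩)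

def glueIso : Vert T ≃ V :=
  (Equiv.sumCongr (AutG.restrictNone ψQ) ψS.1).trans (collapse T)

theorem isInsIso_glue (hT : ∀ v, v ∈ T ↔ ¬ Reach edge v z) (hu : SingleEntry edge T) :
    IsInsIso edge hx hy hz (glueDatum ψQ ψS) (glueIso ψQ ψS) := by
  refine ⟨fun u v => ?_, congrArg Subtype.val ψS.2.2.1, congrArg Subtype.val ψS.2.2.2, ?_⟩
  · rw [glueIso, Equiv.trans_apply, Equiv.trans_apply, edge_collapse hT hu]
    rcases u with a | s <;> rcases v with b | w
    · exact ψQ.2.1 a.1 b.1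
    · show dite _ _ _ = dite _ _ _
      have hQ : qedge edge T (AutG.restrictNone ψQ a).1 none = qedge edge T a.1 none :=
        AutG.qedge_apply_none ψQ a.1
      by_cases h : qedge edge T a.1 none = true
      · rw [dif_pos (hQ.trans h), dif_pos h]
        exact decide_eq_decide.2 (Equiv.symm_apply_eq _).symm
      · rw [dif_neg (hQ ▸ h), dif_neg h]
    · rfl
    · exact ψS.2.1 s w
  · show collapse T (.inl (AutG.restrictNone ψQ _)) = z
    rw [show AutG.restrictNone ψQ ⟨some ⟨z, hz⟩, _⟩ = ⟨some ⟨z, hz⟩, Option.some_ne_none _⟩ from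
      Subtype.ext ψQ.2.2.2]
    rfl

variable {π : Datum edge T} {φ : Vert T ≃ V} (hT : ∀ v, v ∈ T ↔ ¬ Reach edge v z)

noncomputable def IsInsIso.autSub (hC : IsInsIso edge hx hy hz π φ) :
    AutG (subEdge edge T) ⟨x, hx⟩ ⟨y, hy⟩ :=
  ⟨isoSub hT hC.1 hC.2.2.2, fun s t => hC.1 (.inr s) (.inr t), Subtype.ext hC.2.1,
    Subtype.ext hC.2.2.1⟩

noncomputable def IsInsIso.autQuot (hC : IsInsIso edge hx hy hz π φ) :
    AutG (qedge edge T) none (some ⟨z, hz⟩) := by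
  refine ⟨(isoQuot hT hC.1 hC.2.2.2).optionCongr, ?_, rfl, congrArg some (Subtype.ext hC.2.2.2)⟩
  rintro (_ | a) (_ | b)
  · rfl
  · rfl
  · exact qedge_iso_inl_none hT hC.1 hC.2.2.2 _
  · exact hC.1 (.inl _) (.inl _)

theorem IsInsIso.glueIso_autQuot_autSub (hC : IsInsIso edge hx hy hz π φ) :
    glueIso (hC.autQuot hT) (hC.autSub hT) = φ := by
  ext (⟨_ | a, h⟩ | t)
  exacts [absurd rfl h, rfl, rfl]

theorem IsInsIso.glueDatum_autQuot_autSub (hu : SingleEntry edge T)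
    (hC : IsInsIso edge hx hy hz π φ) : glueDatum (hC.autQuot hT) (hC.autSub hT) = π := by
  funext ⟨a, h⟩
  rcases a with _ | a
  · exact absurd h (by simp [qedge])
  · refine (Equiv.symm_apply_eq _).2 (Subtype.ext ?_)
    refine congrArg Subtype.val ((canonicalDatum_eq_iff hu _ _).2 ?_)
    exact (edge_iso_inl_inr hC.1 ⟨some a, Option.some_ne_none _⟩ _).2 ⟨h, rfl⟩

theorem autSub_isInsIso_glue (hu : SingleEntry edge T) :
    (isInsIso_glue ψQ ψS hT hu).autSub hT = ψS :=
  Subtype.ext (Equiv.ext fun _ => rfl)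

theorem autQuot_isInsIso_glue (hu : SingleEntry edge T) :
    (isInsIso_glue ψQ ψS hT hu).autQuot hT = ψQ := by
  refine Subtype.ext (Equiv.ext ?_)
  rintro (_ | a)
  · exact ψQ.2.2.1.symm
  · exact some_collapse_inl _

noncomputable def isInsIsoEquivAut (hu : SingleEntry edge T) :
    {p : Datum edge T × (Vert T ≃ V) // IsInsIso edge hx hy hz p.1 p.2} ≃
      AutG (qedge edge T) none (some ⟨z, hz⟩) × AutG (subEdge edge T) ⟨x, hx⟩ ⟨y, hy⟩ where
  toFun p := (p.2.autQuot hT, p.2.autSub hT)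
  invFun ψ := ⟨(glueDatum ψ.1 ψ.2, glueIso ψ.1 ψ.2), isInsIso_glue ψ.1 ψ.2 hT hu⟩
  left_inv p := Subtype.ext (Prod.ext (p.2.glueDatum_autQuot_autSub hT hu)
    (p.2.glueIso_autQuot_autSub hT))
  right_inv ψ := Prod.ext (autQuot_isInsIso_glue ψ.1 ψ.2 hT hu) (autSub_isInsIso_glue ψ.1 ψ.2 hT hu)

theorem card_datum_mul_card_aut3 (hT : ∀ v, v ∈ T ↔ ¬ Reach edge v z)
    (hu : SingleEntry edge T) :
    Nat.card {π : Datum edge T // ∃ φ, IsInsIso edge hx hy hz π φ} * Nat.card (Aut3 edge x y z) =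
      Nat.card (AutG (qedge edge T) none (some ⟨z, hz⟩)) *
        Nat.card (AutG (subEdge edge T) ⟨x, hx⟩ ⟨y, hy⟩) := by
  let Data := {π : Datum edge T // ∃ φ, IsInsIso edge hx hy hz π φ}
  calc Nat.card Data * Nat.card (Aut3 edge x y z)
      = Nat.card (Σ π : Data, {φ // IsInsIso edge hx hy hz π.1 φ}) := by
        rw [← Nat.card_prod, ← Nat.card_congr (Equiv.sigmaEquivProd _ _)]
        exact Nat.card_congr (Equiv.sigmaCongrRight fun π => π.2.choose_spec.equivAut3.symm)
    _ = Nat.card {p : Datum edge T × (Vert T ≃ V) // IsInsIso edge hx hy hz p.1 p.2} :=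
        Nat.card_congr ⟨fun s => ⟨(s.1.1, s.2.1), s.2.2⟩,
          fun p => ⟨⟨p.1.1, p.1.2, p.2⟩, p.1.2, p.2⟩, fun _ => rfl, fun _ => rfl⟩
    _ = _ := by rw [Nat.card_congr (isInsIsoEquivAut hT hu), Nat.card_prod]

end Factorization

end Insertion

theorem div_eq_one_div_of_mul_eq {L A q s : ℕ} (hA : 0 < A) (hq : 0 < q) (hs : 0 < s)
    (h : L * A = q * s) : (L : ℚ) / (q * s) = 1 / A := by
  rw [div_eq_div_iff (by positivity) (by positivity), one_mul]
  exact_mod_cast h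

theorem stmt_16_general {V : Type} [Fintype V] [DecidableEq V]
    (edge : V → V → Bool) (b1 b2 b3 : V)
    (hΓ : IsAdm edge {b1, b2, b3})
    (TL : Finset V) (hTL : NormalOn edge {b1, b2, b3} TL {b1, b2})
    (hb1L : b1 ∈ TL) (hb2L : b2 ∈ TL) (hb3L : b3 ∉ TL)
    (TR : Finset V) (hTR : NormalOn edge {b1, b2, b3} TR {b2, b3})
    (hb2R : b2 ∈ TR) (hb3R : b3 ∈ TR) (hb1R : b1 ∉ TR) :
    -- the left factorization: Γ₁ = Γ/α_L(Γ) (quotient), Γ₂ = α_L(Γ) (subgraph);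
    -- left insertion data insert Γ₂ at the collapsed (first) boundary vertex `none`
    let eSL : {v : V // v ∈ TL} → {v : V // v ∈ TL} → Bool := fun a b => edge a.1 b.1
    let eSR : {v : V // v ∈ TR} → {v : V // v ∈ TR} → Bool := fun a b => edge a.1 b.1
    let L : ℕ := Nat.card
      {π : {a : Option {v : V // v ∉ TL} // qedge edge TL a none = true} → {v : V // v ∈ TL} //
        ∃ φ : ({a : Option {v : V // v ∉ TL} // a ≠ none} ⊕ {v : V // v ∈ TL}) ≃ V,
          (∀ u v, edge (φ u) (φ v) = edgeIns (qedge edge TL) eSL none π u v) ∧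
          φ (.inr ⟨b1, hb1L⟩) = b1 ∧ φ (.inr ⟨b2, hb2L⟩) = b2 ∧
          φ (.inl ⟨some ⟨b3, hb3L⟩, Option.some_ne_none _⟩) = b3}
    let R : ℕ := Nat.card
      {π : {a : Option {v : V // v ∉ TR} // qedge edge TR a none = true} → {v : V // v ∈ TR} //
        ∃ φ : ({a : Option {v : V // v ∉ TR} // a ≠ none} ⊕ {v : V // v ∈ TR}) ≃ V,
          (∀ u v, edge (φ u) (φ v) = edgeIns (qedge edge TR) eSR none π u v) ∧
          φ (.inl ⟨some ⟨b1, hb1R⟩, Option.some_ne_none _⟩) = b1 ∧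
          φ (.inr ⟨b2, hb2R⟩) = b2 ∧ φ (.inr ⟨b3, hb3R⟩) = b3}
    let autQL : ℕ := Nat.card (AutG (qedge edge TL) none (some ⟨b3, hb3L⟩))
    let autSL : ℕ := Nat.card (AutG eSL ⟨b1, hb1L⟩ ⟨b2, hb2L⟩)
    let autQR : ℕ := Nat.card (AutG (qedge edge TR) (some ⟨b1, hb1R⟩) none)
    let autSR : ℕ := Nat.card (AutG eSR ⟨b2, hb2R⟩ ⟨b3, hb3R⟩)
    ((L : ℚ) / ((autQL : ℚ) * (autSL : ℚ)) = (R : ℚ) / ((autQR : ℚ) * (autSR : ℚ))) ∧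
    (L : ℚ) / ((autQL : ℚ) * (autSL : ℚ)) = 1 / (Nat.card (Aut3 edge b1 b2 b3) : ℚ) := by
  intro eSL eSR L R autQL autSL autQR autSR
  have hL : L * Nat.card (Aut3 edge b1 b2 b3) = autQL * autSL :=
    Insertion.card_datum_mul_card_aut3 (hTL.mem_iff_not_reach hΓ (by grind) hb3L)
      fun v hv t₁ ht₁ t₂ ht₂ => hTL.eq_of_edge_of_edge hΓ hv ht₁ ht₂
  have hR : R * Nat.card (Aut3 edge b1 b2 b3) = autQR * autSR := by
    have hQ : autQR = Nat.card (AutG (qedge edge TR) none (some ⟨b1, hb1R⟩)) :=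
      card_autG_comm _ _ _
    rw [card_aut3_rotate, hQ, ← Insertion.card_datum_mul_card_aut3
      (hTR.mem_iff_not_reach hΓ (by grind) hb1R)
      fun v hv t₁ ht₁ t₂ ht₂ => hTR.eq_of_edge_of_edge hΓ hv ht₁ ht₂]
    exact congrArg (· * _) (Nat.card_congr (Equiv.subtypeEquivRight fun _ =>
      exists_congr fun _ => isIso3_rotate))
  have hA := card_aut3_pos edge b1 b2 b3
  have hL' := div_eq_one_div_of_mul_eq hA (card_autG_pos _ _ _) (card_autG_pos _ _ _) hL
  have hR' := div_eq_one_div_of_mul_eq hA (card_autG_pos _ _ _) (card_autG_pos _ _ _) hR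
  exact ⟨hL'.trans hR'.symm, hL'⟩

/-- For an admissible graph `Γ ∈ G_{n,3}` with its unique left factorization
`(Γ/α_L(Γ), α_L(Γ))` (here `TL` is the vertex set of `α_L(Γ)`) and right factorization
`(Γ/α_R(Γ), α_R(Γ))`, the normalized left coefficient equals the normalized right one:
`L_Γ / (|Aut(Γ/α_L)|·|Aut(α_L)|) = R_Γ / (|Aut(Γ/α_R)|·|Aut(α_R)|)`, where `L_Γ` (resp.
`R_Γ`) is the number of left (resp. right) insertion data producing a graph isomorphic to
`Γ`; indeed both sides equal `1/|Aut(Γ)|`. -/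
theorem stmt_16 {V : Type} [Fintype V] [DecidableEq V]
    (edge : V → V → Bool) (b1 b2 b3 : V)
    (h12 : b1 ≠ b2) (h13 : b1 ≠ b3) (h23 : b2 ≠ b3)
    (hΓ : IsAdm edge {b1, b2, b3})
    (TL : Finset V) (hTL : NormalOn edge {b1, b2, b3} TL {b1, b2})
    (hb1L : b1 ∈ TL) (hb2L : b2 ∈ TL) (hb3L : b3 ∉ TL)
    (TR : Finset V) (hTR : NormalOn edge {b1, b2, b3} TR {b2, b3})
    (hb2R : b2 ∈ TR) (hb3R : b3 ∈ TR) (hb1R : b1 ∉ TR) :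
    -- the left factorization: Γ₁ = Γ/α_L(Γ) (quotient), Γ₂ = α_L(Γ) (subgraph);
    -- left insertion data insert Γ₂ at the collapsed (first) boundary vertex `none`
    let eSL : {v : V // v ∈ TL} → {v : V // v ∈ TL} → Bool := fun a b => edge a.1 b.1
    let eSR : {v : V // v ∈ TR} → {v : V // v ∈ TR} → Bool := fun a b => edge a.1 b.1
    let L : ℕ := Nat.card
      {π : {a : Option {v : V // v ∉ TL} // qedge edge TL a none = true} → {v : V // v ∈ TL} //
        ∃ φ : ({a : Option {v : V // v ∉ TL} // a ≠ none} ⊕ {v : V // v ∈ TL}) ≃ V,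
          (∀ u v, edge (φ u) (φ v) = edgeIns (qedge edge TL) eSL none π u v) ∧
          φ (.inr ⟨b1, hb1L⟩) = b1 ∧ φ (.inr ⟨b2, hb2L⟩) = b2 ∧
          φ (.inl ⟨some ⟨b3, hb3L⟩, Option.some_ne_none _⟩) = b3}
    let R : ℕ := Nat.card
      {π : {a : Option {v : V // v ∉ TR} // qedge edge TR a none = true} → {v : V // v ∈ TR} //
        ∃ φ : ({a : Option {v : V // v ∉ TR} // a ≠ none} ⊕ {v : V // v ∈ TR}) ≃ V,
          (∀ u v, edge (φ u) (φ v) = edgeIns (qedge edge TR) eSR none π u v) ∧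
          φ (.inl ⟨some ⟨b1, hb1R⟩, Option.some_ne_none _⟩) = b1 ∧
          φ (.inr ⟨b2, hb2R⟩) = b2 ∧ φ (.inr ⟨b3, hb3R⟩) = b3}
    let autQL : ℕ := Nat.card (AutG (qedge edge TL) none (some ⟨b3, hb3L⟩))
    let autSL : ℕ := Nat.card (AutG eSL ⟨b1, hb1L⟩ ⟨b2, hb2L⟩)
    let autQR : ℕ := Nat.card (AutG (qedge edge TR) (some ⟨b1, hb1R⟩) none)
    let autSR : ℕ := Nat.card (AutG eSR ⟨b2, hb2R⟩ ⟨b3, hb3R⟩)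
    ((L : ℚ) / ((autQL : ℚ) * (autSL : ℚ)) = (R : ℚ) / ((autQR : ℚ) * (autSR : ℚ))) ∧
    (L : ℚ) / ((autQL : ℚ) * (autSL : ℚ)) = 1 / (Nat.card (Aut3 edge b1 b2 b3) : ℚ) :=
  stmt_16_general edge b1 b2 b3 hΓ TL hTL hb1L hb2L hb3L TR hTR hb2R hb3R hb1R
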